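/- arXiv:2503.15756 — 8 statements merged into one kernel-verified Lean document; each statement's English description precedes it below -/
import Mathlib

section
/- If a, b : ℤ\{0} → ℝ are even functions satisfying (u−v)·a(u)·a(v) + (u+v)·a(u+v)·(b(u)−b(v)) = 0 for all nonzero integers u, v with u+v ≠ 0, and b is identically zero, and a(R) ≠ 0 for some R > 0, then a(x) = 0 for every positive integer x ≠ R (i.e., the support of a on positive integers is exactly {R}). -/
lemma sub_mul_mul_eq_zero_of_b_eq_zero {a b : ℤ → ℝ}
    (hfe : ∀ u v : ℤ, u ≠ 0 → v ≠ 0 → u + v ≠ 0 →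
      ((u : ℝ) - (v : ℝ)) * a u * a v
        + ((u : ℝ) + (v : ℝ)) * a (u + v) * (b u - b v) = 0)
    (hb0 : ∀ r : ℤ, r ≠ 0 → b r = 0) {u v : ℤ} (hu : u ≠ 0) (hv : v ≠ 0)
    (huv : u + v ≠ 0) :
    ((u : ℝ) - v) * a u * a v = 0 := by
  simpa [hb0 u hu, hb0 v hv] using hfe u v hu hv huv

theorem stmt_0_general (a b : ℤ → ℝ)
    (hfe : ∀ u v : ℤ, u ≠ 0 → v ≠ 0 → u + v ≠ 0 →
      ((u : ℝ) - (v : ℝ)) * a u * a v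
        + ((u : ℝ) + (v : ℝ)) * a (u + v) * (b u - b v) = 0)
    (hb0 : ∀ r : ℤ, r ≠ 0 → b r = 0)
    (R : ℤ) (hR : 0 < R) (haR : a R ≠ 0) :
    ∀ x : ℤ, 0 < x → x ≠ R → a x = 0 := by
  intro x hx hxR
  have h := sub_mul_mul_eq_zero_of_b_eq_zero hfe hb0
    (u := x) (v := R) (by omega) (by omega) (by omega)
  have hsub : (x : ℝ) - R ≠ 0 := sub_ne_zero.mpr (by exact_mod_cast hxR)
  simpa [hsub, haR] using h

theorem stmt_0 (a b : ℤ → ℝ)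
    (ha_even : ∀ r : ℤ, a (-r) = a r) (hb_even : ∀ r : ℤ, b (-r) = b r)
    (hfe : ∀ u v : ℤ, u ≠ 0 → v ≠ 0 → u + v ≠ 0 →
      ((u : ℝ) - (v : ℝ)) * a u * a v
        + ((u : ℝ) + (v : ℝ)) * a (u + v) * (b u - b v) = 0)
    (hb0 : ∀ r : ℤ, r ≠ 0 → b r = 0)
    (R : ℤ) (hR : 0 < R) (haR : a R ≠ 0) :
    ∀ x : ℤ, 0 < x → x ≠ R → a x = 0 :=
  stmt_0_general a b hfe hb0 R hR haR
end

section
/- Let a, b : ℤ\{0} → ℝ be even functions satisfying (u−v)a(u)a(v) + (u+v)a(u+v)(b(u)−b(v)) = 0 for all nonzero integers u, v with u+v ≠ 0. If i > j are positive integers with a(i) ≠ 0 and a(j) ≠ 0, then a(i+j) ≠ 0, a(i−j) ≠ 0, and b(i) ≠ b(j). In particular the set E_a = {r > 0 : a(r) ≠ 0} is closed under sums and differences. -/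
/-!
Evaluating the functional equation at `(i, j)` gives
`(i - j) a(i) a(j) + (i + j) a(i + j) (b(i) - b(j)) = 0`, whose first term is nonzero; hence
`a(i + j) ≠ 0` and `b(i) ≠ b(j)`. By evenness, evaluating at `(i, -j)` gives
`(i + j) a(i) a(j) + (i - j) a(i - j) (b(i) - b(j)) = 0`, and the same argument yields `a(i - j) ≠ 0`.
-/

lemma ne_zero_and_ne_of_mul_add_mul_sub_eq_zero {K : Type*} [Field K] {d s x y z p q : K}
    (hd : d ≠ 0) (hx : x ≠ 0) (hy : y ≠ 0) (h : d * x * y + s * z * (p - q) = 0) :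
    z ≠ 0 ∧ p ≠ q := by
  have hzpq : z * (p - q) ≠ 0 := by
    intro hzero
    have : d * x * y = 0 := by linear_combination h - s * hzero
    simp_all
  rw [mul_ne_zero_iff, sub_ne_zero] at hzpq
  exact hzpq

lemma conservation_neg_right {a b : ℤ → ℝ}
    (ha_even : ∀ r : ℤ, a (-r) = a r) (hb_even : ∀ r : ℤ, b (-r) = b r)
    (hfe : ∀ u v : ℤ, u ≠ 0 → v ≠ 0 → u + v ≠ 0 →
      ((u : ℝ) - (v : ℝ)) * a u * a v
        + ((u : ℝ) + (v : ℝ)) * a (u + v) * (b u - b v) = 0)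
    {u v : ℤ} (hu : u ≠ 0) (hv : v ≠ 0) (huv : u - v ≠ 0) :
    ((u : ℝ) + (v : ℝ)) * a u * a v
      + ((u : ℝ) - (v : ℝ)) * a (u - v) * (b u - b v) = 0 := by
  have h := hfe u (-v) hu (neg_ne_zero.mpr hv) (by rwa [← sub_eq_add_neg])
  rw [ha_even, hb_even, ← sub_eq_add_neg] at h
  push_cast at h
  simpa only [sub_neg_eq_add, ← sub_eq_add_neg] using h

theorem stmt_2 (a b : ℤ → ℝ)
    (ha_even : ∀ r : ℤ, a (-r) = a r) (hb_even : ∀ r : ℤ, b (-r) = b r)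
    (hfe : ∀ u v : ℤ, u ≠ 0 → v ≠ 0 → u + v ≠ 0 →
      ((u : ℝ) - (v : ℝ)) * a u * a v
        + ((u : ℝ) + (v : ℝ)) * a (u + v) * (b u - b v) = 0)
    (i j : ℤ) (hj : 0 < j) (hij : j < i) (hai : a i ≠ 0) (haj : a j ≠ 0) :
    a (i + j) ≠ 0 ∧ a (i - j) ≠ 0 ∧ b i ≠ b j := by
  have hi : i ≠ 0 := (hj.trans hij).ne'
  have hsub : (i : ℝ) - j ≠ 0 := sub_ne_zero.mpr (by exact_mod_cast hij.ne')
  have hadd : (i : ℝ) + j ≠ 0 := by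
    have : (0 : ℝ) < i + j := by exact_mod_cast add_pos (hj.trans hij) hj
    exact this.ne'
  obtain ⟨hai_add, hb⟩ := ne_zero_and_ne_of_mul_add_mul_sub_eq_zero hsub hai haj
    (hfe i j hi hj.ne' (by omega))
  obtain ⟨hai_sub, -⟩ := ne_zero_and_ne_of_mul_add_mul_sub_eq_zero hadd hai haj
    (conservation_neg_right ha_even hb_even hfe hi hj.ne' (by omega))
  exact ⟨hai_add, hai_sub, hb⟩
end

section
/- Let a, b : ℤ\{0} → ℝ be even functions satisfying the conservation equation (u−v)a(u)a(v) + (u+v)a(u+v)(b(u)−b(v)) = 0 for all nonzero u, v with u+v ≠ 0, with b(r) → 0 as r → ∞. Suppose the support of a on positive integers equals {nR : n ≥ 1} for some R > 0. Then the support of b on positive integers is contained in {nR : n ≥ 1}. -/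
open Filter Topology

def SatisfiesConservation (a b : ℤ → ℝ) : Prop :=
  ∀ u v : ℤ, u ≠ 0 → v ≠ 0 → u + v ≠ 0 →
    ((u : ℝ) - (v : ℝ)) * a u * a v + ((u : ℝ) + (v : ℝ)) * a (u + v) * (b u - b v) = 0

theorem SatisfiesConservation.apply_eq_of_apply_eq_zero {a b : ℤ → ℝ}
    (h : SatisfiesConservation a b) {u v : ℤ} (hu : u ≠ 0) (hv : v ≠ 0) (huv : u + v ≠ 0)
    (hau : a u = 0) (hauv : a (u + v) ≠ 0) : b u = b v := by
  have hcons := h u v hu hv huv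
  have huv' : (u : ℝ) + v ≠ 0 := by exact_mod_cast huv
  rw [hau, mul_zero, zero_mul, zero_add] at hcons
  simpa [huv', hauv, sub_eq_zero] using hcons

theorem Int.tendsto_atTop_of_tendsto_natCast {α : Type*} {f : ℤ → α} {l : Filter α}
    (hf : Tendsto (fun n : ℕ => f n) atTop l) : Tendsto f atTop l := by
  rwa [← Nat.map_cast_int_atTop, tendsto_map'_iff]

theorem stmt_4_general (a b : ℤ → ℝ)
    (hfe : ∀ u v : ℤ, u ≠ 0 → v ≠ 0 → u + v ≠ 0 →
      ((u : ℝ) - (v : ℝ)) * a u * a v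
        + ((u : ℝ) + (v : ℝ)) * a (u + v) * (b u - b v) = 0)
    (hb_decay : Tendsto (fun r : ℕ => b (r : ℤ)) atTop (nhds 0))
    (R : ℤ) (hR : 0 < R)
    (hsupp : ∀ r : ℤ, 0 < r → (a r ≠ 0 ↔ R ∣ r)) :
    ∀ r : ℤ, 0 < r → b r ≠ 0 → R ∣ r := by
  intro r hr hbr
  by_contra hRr
  have har : a r = 0 := not_not.mp (mt (hsupp r hr).mp hRr)
  -- Pair `r` with `v = nR - r`: then `a r = 0` but `a (r + v) = a (nR) ≠ 0`, so `b r = b v`.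
  have hconst : ∀ᶠ n in atTop, b (n * R - r) = b r := by
    filter_upwards [eventually_gt_atTop r] with n hn
    have hnR : r < n * R := hn.trans_le (le_mul_of_one_le_right (hr.trans hn).le hR)
    have hsum : r + (n * R - r) = n * R := add_sub_cancel r (n * R)
    refine (SatisfiesConservation.apply_eq_of_apply_eq_zero hfe hr.ne' (by omega) (by omega) har
      ?_).symm
    rw [hsum, hsupp _ (by omega)]
    exact dvd_mul_left R n
  have hshift : Tendsto (fun n : ℤ => n * R - r) atTop atTop :=
    tendsto_atTop_add_const_right _ _ (tendsto_id.atTop_mul_const' hR)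
  have hlim := ((Int.tendsto_atTop_of_tendsto_natCast hb_decay).comp hshift).congr' hconst
  exact hbr (tendsto_nhds_unique tendsto_const_nhds hlim)

theorem stmt_4 (a b : ℤ → ℝ)
    (ha_even : ∀ r : ℤ, a (-r) = a r) (hb_even : ∀ r : ℤ, b (-r) = b r)
    (hfe : ∀ u v : ℤ, u ≠ 0 → v ≠ 0 → u + v ≠ 0 →
      ((u : ℝ) - (v : ℝ)) * a u * a v
        + ((u : ℝ) + (v : ℝ)) * a (u + v) * (b u - b v) = 0)
    (hb_decay : Tendsto (fun r : ℕ => b (r : ℤ)) atTop (nhds 0))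
    (R : ℤ) (hR : 0 < R)
    (hsupp : ∀ r : ℤ, 0 < r → (a r ≠ 0 ↔ R ∣ r)) :
    ∀ r : ℤ, 0 < r → b r ≠ 0 → R ∣ r :=
  stmt_4_general a b hfe hb_decay R hR hsupp
end

section
/- Let a, b : ℤ\{0} → ℝ be even functions satisfying (u−v)a(u)a(v) + (u+v)a(u+v)(b(u)−b(v)) = 0 for all nonzero u, v with u+v ≠ 0, and suppose a(nR) ≠ 0 for all n ≥ 1 for some fixed R > 0. Then for all integers n ≥ 2, a((n+1)R) = ((n−1)²/(n+1)²)·a((n−1)R). Consequently a(nR) = a(R)/n² for odd n and a(nR) = λ·a(R)/n² for even n, where λ = 4a(2R)/a(R). -/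
/-!
Put `w m := m² a(m)`. Taking `v` and `-v` in the functional equation gives two expressions for
`b u - b v`; equating them yields `w (u + v) = w (u - v)` whenever `a u a v ≠ 0`. With `u = nR`,
`v = R` this says that `n ↦ w (nR)` is invariant under `n ↦ n + 2` for `n ≥ 1`, so it equals
`w R` on odd and `w (2R)` on even `n`.
-/

section SpinCurrent

variable {a b : ℤ → ℝ} (ha_even : ∀ r : ℤ, a (-r) = a r) (hb_even : ∀ r : ℤ, b (-r) = b r)
  (hfe : ∀ u v : ℤ, u ≠ 0 → v ≠ 0 → u + v ≠ 0 →
    ((u : ℝ) - (v : ℝ)) * a u * a v + ((u : ℝ) + (v : ℝ)) * a (u + v) * (b u - b v) = 0)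
include ha_even hb_even hfe

theorem sq_mul_add_eq_sq_mul_sub {u v : ℤ} (hu : u ≠ 0) (hv : v ≠ 0) (hadd : u + v ≠ 0)
    (hsub : u - v ≠ 0) (hau : a u ≠ 0) (hav : a v ≠ 0) :
    ((u : ℝ) + v) ^ 2 * a (u + v) = ((u : ℝ) - v) ^ 2 * a (u - v) := by
  have hplus := hfe u v hu hv hadd
  have hminus := hfe u (-v) hu (neg_ne_zero.mpr hv) (by omega)
  rw [ha_even, hb_even, ← sub_eq_add_neg] at hminus
  push_cast at hminus
  apply mul_left_cancel₀ (mul_ne_zero hau hav)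
  linear_combination ((u : ℝ) + v) * a (u + v) * hminus - ((u : ℝ) - v) * a (u - v) * hplus

theorem sq_mul_apply_add_one_mul_eq {R : ℤ} (hR : 0 < R) (hne : ∀ n : ℤ, 1 ≤ n → a (n * R) ≠ 0)
    (n : ℤ) (hn : 2 ≤ n) :
    ((n + 1 : ℤ) : ℝ) ^ 2 * a ((n + 1) * R) = ((n - 1 : ℤ) : ℝ) ^ 2 * a ((n - 1) * R) := by
  have h := sq_mul_add_eq_sq_mul_sub ha_even hb_even hfe (u := n * R) (v := R)
    (by positivity) hR.ne' (by positivity) (by nlinarith) (hne n (by omega))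
    (by simpa using hne 1 le_rfl)
  rw [← add_one_mul n R, ← sub_one_mul n R] at h
  push_cast at h ⊢
  apply mul_left_cancel₀ (pow_ne_zero 2 (show (R : ℝ) ≠ 0 by exact_mod_cast hR.ne'))
  linear_combination h

end SpinCurrent

theorem eq_of_even_sub_of_step_two {α : Type*} {g : ℤ → α}
    (hg : ∀ n, 2 ≤ n → g (n + 1) = g (n - 1)) {m n : ℤ} (hm : 1 ≤ m) (hmn : m ≤ n)
    (hpar : Even (n - m)) : g n = g m := by
  obtain ⟨k, hk⟩ := hpar
  lift k to ℕ using (by omega)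
  obtain rfl : n = m + 2 * k := by omega
  clear hmn hk
  induction k with
  | zero => simp
  | succ k ih =>
    rw [← ih]
    convert hg (m + 2 * k + 1) (by omega) using 2 <;> push_cast <;> ring

theorem stmt_5 (a b : ℤ → ℝ)
    (ha_even : ∀ r : ℤ, a (-r) = a r) (hb_even : ∀ r : ℤ, b (-r) = b r)
    (hfe : ∀ u v : ℤ, u ≠ 0 → v ≠ 0 → u + v ≠ 0 →
      ((u : ℝ) - (v : ℝ)) * a u * a v
        + ((u : ℝ) + (v : ℝ)) * a (u + v) * (b u - b v) = 0)
    (R : ℤ) (hR : 0 < R)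
    (hne : ∀ n : ℤ, 1 ≤ n → a (n * R) ≠ 0) :
    (∀ n : ℤ, 2 ≤ n →
      a ((n + 1) * R) = (((n : ℝ) - 1) ^ 2 / ((n : ℝ) + 1) ^ 2) * a ((n - 1) * R)) ∧
    (∀ n : ℤ, 1 ≤ n → Odd n → a (n * R) = a R / (n : ℝ) ^ 2) ∧
    (∀ n : ℤ, 1 ≤ n → Even n →
      a (n * R) = (4 * a (2 * R) / a R) * a R / (n : ℝ) ^ 2) := by
  have haR : a R ≠ 0 := by simpa using hne 1 le_rfl
  set g : ℤ → ℝ := fun n ↦ (n : ℝ) ^ 2 * a (n * R) with hg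
  have hstep : ∀ n, 2 ≤ n → g (n + 1) = g (n - 1) :=
    sq_mul_apply_add_one_mul_eq ha_even hb_even hfe hR hne
  refine ⟨fun n hn ↦ ?_, fun n hn hodd ↦ ?_, fun n hn heven ↦ ?_⟩
  · have hn1 : (n : ℝ) + 1 ≠ 0 := by exact_mod_cast (show n + 1 ≠ 0 by omega)
    have h := hstep n hn
    push_cast [hg] at h
    rw [div_mul_eq_mul_div, eq_div_iff (pow_ne_zero 2 hn1)]
    linear_combination h
  · have hgn : g n = g 1 := eq_of_even_sub_of_step_two hstep le_rfl hn (by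
      simpa [Int.even_sub_one, ← Int.not_even_iff_odd] using hodd)
    have hn0 : (n : ℝ) ≠ 0 := by exact_mod_cast (show n ≠ 0 by omega)
    rw [eq_div_iff (pow_ne_zero 2 hn0)]
    simpa [hg, mul_comm] using hgn
  · have hgn : g n = g 2 := eq_of_even_sub_of_step_two hstep one_le_two (by
      rcases heven with ⟨k, rfl⟩; omega) (by simpa [Int.even_sub] using heven)
    have hn0 : (n : ℝ) ≠ 0 := by exact_mod_cast (show n ≠ 0 by omega)
    rw [div_mul_cancel₀ _ haR, eq_div_iff (pow_ne_zero 2 hn0)]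
    simp only [hg] at hgn
    push_cast at hgn
    linear_combination hgn
end

section
/- With notation as in the Haldane–Shastry classification: let a, b satisfy the conservation functional equation, a(nR) = a(R)/n² for odd n and λa(R)/n² for even n with a(R) ≠ 0, and for positive integers m ≠ n let the pairwise differences of b satisfy b((2m+1)R)−b((2n+1)R) = (1/λ)(1/(2m+1)² − 1/(2n+1)²)a(R), b(2mR)−b((2n+1)R) = λ(1/(2m)² − 1/(2n+1)²)a(R), and b(2mR)−b(2nR) = λ(1/(2m)² − 1/(2n)²)a(R). Then λ² = 1. -/
/-! Consistency of the three difference formulas around the triangle of sites `3R`, `7R`, `4R`: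
`b(7R) - b(3R) = (b(4R) - b(3R)) - (b(4R) - b(7R))`. The odd–odd formula gives the left side as
`(1/λ)(1/7² - 1/3²) a(R)`, the two even–odd formulas give the right side as `λ(1/7² - 1/3²) a(R)`,
and since `a(R) ≠ 0` this forces `1/λ = λ`. -/

theorem sq_eq_one_of_inv_mul_eq_mul {G₀ : Type*} [GroupWithZero G₀] {lam k : G₀}
    (hlam : lam ≠ 0) (hk : k ≠ 0) (h : lam⁻¹ * k = lam * k) : lam ^ 2 = 1 := by
  rw [sq, ← inv_mul_cancel₀ hlam, mul_right_cancel₀ hk h]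

theorem stmt_6_general (a b : ℤ → ℝ)
    (R : ℤ) (haR : a R ≠ 0)
    (lam : ℝ) (hlam_ne : lam ≠ 0)
    (hb_oo : ∀ m n : ℤ, 1 ≤ m → 1 ≤ n → m ≠ n →
      b ((2 * m + 1) * R) - b ((2 * n + 1) * R)
        = (1 / lam) * (1 / (2 * (m : ℝ) + 1) ^ 2 - 1 / (2 * (n : ℝ) + 1) ^ 2) * a R)
    (hb_eo : ∀ m n : ℤ, 1 ≤ m → 1 ≤ n → m ≠ n →
      b ((2 * m) * R) - b ((2 * n + 1) * R)
        = lam * (1 / (2 * (m : ℝ)) ^ 2 - 1 / (2 * (n : ℝ) + 1) ^ 2) * a R) :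
    lam ^ 2 = 1 := by
  have odd_odd := hb_oo 3 1 (by norm_num) (by norm_num) (by norm_num)
  have even_odd₇ := hb_eo 2 3 (by norm_num) (by norm_num) (by norm_num)
  have even_odd₃ := hb_eo 2 1 (by norm_num) (by norm_num) (by norm_num)
  have cocycle := sub_sub_sub_cancel_left (b ((2 * 1 + 1) * R)) (b ((2 * 3 + 1) * R))
    (b ((2 * 2) * R))
  rw [even_odd₃, even_odd₇, odd_odd] at cocycle
  refine sq_eq_one_of_inv_mul_eq_mul hlam_ne (k := (1 / 49 - 1 / 9) * a R)
    (mul_ne_zero (by norm_num) haR) ?_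
  push_cast at cocycle
  linear_combination -cocycle

theorem stmt_6 (a b : ℤ → ℝ)
    (ha_even : ∀ r : ℤ, a (-r) = a r) (hb_even : ∀ r : ℤ, b (-r) = b r)
    (hfe : ∀ u v : ℤ, u ≠ 0 → v ≠ 0 → u + v ≠ 0 →
      ((u : ℝ) - (v : ℝ)) * a u * a v
        + ((u : ℝ) + (v : ℝ)) * a (u + v) * (b u - b v) = 0)
    (R : ℤ) (hR : 0 < R) (haR : a R ≠ 0)
    (lam : ℝ) (hlam_ne : lam ≠ 0) (hlam : lam = 4 * a (2 * R) / a R)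
    (ha_odd : ∀ n : ℤ, 1 ≤ n → Odd n → a (n * R) = a R / (n : ℝ) ^ 2)
    (ha_even' : ∀ n : ℤ, 1 ≤ n → Even n → a (n * R) = lam * a R / (n : ℝ) ^ 2)
    (hb_oo : ∀ m n : ℤ, 1 ≤ m → 1 ≤ n → m ≠ n →
      b ((2 * m + 1) * R) - b ((2 * n + 1) * R)
        = (1 / lam) * (1 / (2 * (m : ℝ) + 1) ^ 2 - 1 / (2 * (n : ℝ) + 1) ^ 2) * a R)
    (hb_eo : ∀ m n : ℤ, 1 ≤ m → 1 ≤ n → m ≠ n →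
      b ((2 * m) * R) - b ((2 * n + 1) * R)
        = lam * (1 / (2 * (m : ℝ)) ^ 2 - 1 / (2 * (n : ℝ) + 1) ^ 2) * a R)
    (hb_ee : ∀ m n : ℤ, 1 ≤ m → 1 ≤ n → m ≠ n →
      b ((2 * m) * R) - b ((2 * n) * R)
        = lam * (1 / (2 * (m : ℝ)) ^ 2 - 1 / (2 * (n : ℝ)) ^ 2) * a R) :
    lam ^ 2 = 1 :=
  stmt_6_general a b R haR lam hlam_ne hb_oo hb_eo
end

section
/- Classification theorem: Let a, b : ℤ\{0} → ℝ be even, with a not identically zero and b(r) → 0 as r → ∞, satisfying (u−v)a(u)a(v) + (u+v)a(u+v)(b(u)−b(v)) = 0 for all nonzero u, v with u+v ≠ 0. Then either (1) there exists R > 0 with a supported exactly on {±R} and b ≡ 0, or (2) there exists R > 0 and a constant c = a(R) ≠ 0 such that either a(nR) = b(nR) = c/n² for all n ≥ 1 with a, b vanishing off multiples of R, or a(nR) = (−1)^{n+1}c/n², b(nR) = −c/n² for all n ≥ 1 with a, b vanishing off multiples of R. -/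
/-!
Let `R` be the least positive point where `a` does not vanish. The functional equation at
`(u, ±R)` shows that the support of `a` is stable under `u ↦ u ± R` away from `0, ±R`, hence
lies in `Rℤ`; and at `(u + R, u)` it shows that where `a` vanishes along a progression
`m + kR`, `b` is constant along it, hence zero because `b → 0`.

Restricted to the lattice `Rℤ`, `a` and `b` satisfy the same equation. Either `a` lives on
`±R` (the XX chain), or `a (nR) ≠ 0` for every `n ≥ 1`; then eliminating `b` between the
equations at `(n + 1, ±1)` gives `n² a n = (n + 2)² a (n + 2)`, so `n² a n` equals `a 1` for
odd and some `d` for even `n`. Feeding this back, `b n` is `const + const / n²` on each parity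
class, and `b → 0` forces `b 1 = d` and `d b 1 = (a 1)²`: `d = ± a 1`, the Haldane–Shastry
chain and its sublattice spin-flipped version.
-/

open Filter Topology

/-- The couplings `a`, `b` of `H = ∑ a(m - n) (SˣSˣ + SʸSʸ) + b(m - n) SᶻSᶻ` for which the spin
current is exactly conserved. -/
structure ConservesCurrent (a b : ℤ → ℝ) : Prop where
  a_even : a.Even
  b_even : b.Even
  funEq : ∀ u v : ℤ, u ≠ 0 → v ≠ 0 → u + v ≠ 0 →
    ((u : ℝ) - (v : ℝ)) * a u * a v + ((u : ℝ) + (v : ℝ)) * a (u + v) * (b u - b v) = 0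

theorem apply_eq_of_even_sub {α : Type*} {f : ℤ → α} {m : ℤ}
    (hf : ∀ n, m ≤ n → f (n + 2) = f n) {n : ℤ} (hmn : m ≤ n) (hpar : Even (n - m)) :
    f n = f m := by
  have hstep : ∀ k : ℕ, f (m + 2 * k) = f m := by
    intro k
    induction k with
    | zero => simp
    | succ k ih =>
      rw [← ih, ← hf (m + 2 * k) (by omega)]
      congr 1
      push_cast
      ring
  obtain ⟨k, hk⟩ := hpar
  rw [← hstep k.toNat]
  congr 1
  omega

theorem forall_pos_of_mul_of_not_dvd {P : ℤ → Prop} {R : ℤ} (hR : 0 < R)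
    (hmul : ∀ n, 1 ≤ n → P (n * R)) (hoff : ∀ r, 0 < r → ¬R ∣ r → P r) {r : ℤ} (hr : 0 < r) :
    P r := by
  by_cases hRr : R ∣ r
  · obtain ⟨n, rfl⟩ := hRr
    rw [mul_comm]
    exact hmul n (by nlinarith)
  · exact hoff r hr hRr

theorem eq_zero_of_tendsto_of_eq_add_div_sq {f : ℤ → ℝ} (hf : Tendsto f atTop (𝓝 0))
    {g : ℕ → ℤ} (hg : Tendsto g atTop atTop) {c e : ℝ}
    (hfg : ∀ k, f (g k) = c + e / (g k : ℝ) ^ 2) : c = 0 := by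
  have hsq : Tendsto (fun k => (g k : ℝ) ^ 2) atTop atTop :=
    (tendsto_pow_atTop two_ne_zero).comp (tendsto_intCast_atTop_iff.2 hg)
  have hlim : Tendsto (fun k => c + e / (g k : ℝ) ^ 2) atTop (𝓝 (c + 0)) :=
    tendsto_const_nhds.add (tendsto_const_nhds.div_atTop hsq)
  simpa using tendsto_nhds_unique hlim ((hf.comp hg).congr hfg)

theorem exists_least_pos_apply_ne_zero {a : ℤ → ℝ} (ha : a.Even) (hne : ∃ r, r ≠ 0 ∧ a r ≠ 0) :
    ∃ R : ℤ, 0 < R ∧ a R ≠ 0 ∧ ∀ r, 0 < r → r < R → a r = 0 := by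
  classical
  have hex : ∃ n : ℕ, 0 < n ∧ a n ≠ 0 := by
    obtain ⟨r, hr, har⟩ := hne
    refine ⟨r.natAbs, Int.natAbs_pos.2 hr, ?_⟩
    rcases Int.natAbs_eq r with e | e <;> rw [e] at har
    · exact har
    · rwa [ha] at har
  refine ⟨Nat.find hex, by exact_mod_cast (Nat.find_spec hex).1, (Nat.find_spec hex).2,
    fun r hr hrR => ?_⟩
  by_contra hne
  lift r to ℕ using hr.le
  exact Nat.find_min hex (by exact_mod_cast hrR) ⟨by exact_mod_cast hr, hne⟩

namespace ConservesCurrent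

variable {a b : ℤ → ℝ}

theorem comp_mul (h : ConservesCurrent a b) {R : ℤ} (hR : R ≠ 0) :
    ConservesCurrent (fun n => a (n * R)) (fun n => b (n * R)) where
  a_even n := by simp only [neg_mul, h.a_even _]
  b_even n := by simp only [neg_mul, h.b_even _]
  funEq u v hu hv huv := by
    have e := h.funEq (u * R) (v * R) (mul_ne_zero hu hR) (mul_ne_zero hv hR)
      (by rw [← add_mul]; exact mul_ne_zero huv hR)
    rw [← add_mul] at e
    push_cast at e
    apply mul_left_cancel₀ (show (R : ℝ) ≠ 0 by exact_mod_cast hR)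
    linear_combination e

theorem funEq_sub (h : ConservesCurrent a b) {u v : ℤ} (hu : u ≠ 0) (hv : v ≠ 0)
    (huv : u - v ≠ 0) :
    ((u : ℝ) + v) * a u * a v + ((u : ℝ) - v) * a (u - v) * (b u - b v) = 0 := by
  have e := h.funEq u (-v) hu (neg_ne_zero.2 hv) (by rwa [← sub_eq_add_neg])
  rw [h.a_even, h.b_even, ← sub_eq_add_neg] at e
  push_cast at e
  linear_combination e

theorem a_add_ne_zero (h : ConservesCurrent a b) {R u : ℤ} (hR0 : R ≠ 0) (hR : a R ≠ 0)
    (hu0 : u ≠ 0) (hu : a u ≠ 0) (huR : u ≠ R) (huR' : u + R ≠ 0) : a (u + R) ≠ 0 := by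
  intro hz
  have e := h.funEq u R hu0 hR0 huR'
  rw [hz, mul_zero, zero_mul, add_zero] at e
  have hsub : (u : ℝ) - R ≠ 0 := sub_ne_zero.2 (by exact_mod_cast huR)
  exact mul_ne_zero (mul_ne_zero hsub hu) hR e

theorem a_sub_ne_zero (h : ConservesCurrent a b) {R u : ℤ} (hR0 : R ≠ 0) (hR : a R ≠ 0)
    (hu0 : u ≠ 0) (hu : a u ≠ 0) (huR : u ≠ -R) (huR' : u - R ≠ 0) : a (u - R) ≠ 0 := by
  have := h.a_add_ne_zero hR0 hR (neg_ne_zero.2 hu0) (by rwa [h.a_even]) (by omega) (by omega)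
  rwa [← h.a_even, show -(u - R) = -u + R by ring]

theorem b_add_eq_of_a_eq_zero (h : ConservesCurrent a b) {R u : ℤ} (hR0 : R ≠ 0)
    (hR : a R ≠ 0) (hu0 : u ≠ 0) (huR : u + R ≠ 0) (hu : a u = 0) : b (u + R) = b u := by
  have e := h.funEq_sub huR hu0 (by rwa [add_sub_cancel_left])
  rw [add_sub_cancel_left, hu] at e
  push_cast at e
  have e' : (R : ℝ) * a R * (b (u + R) - b u) = 0 := by linear_combination e
  have hR' : (R : ℝ) ≠ 0 := by exact_mod_cast hR0
  exact sub_eq_zero.1 ((mul_eq_zero.1 e').resolve_left (mul_ne_zero hR' hR))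

theorem b_add_mul_eq_zero_of_a_add_mul_eq_zero (h : ConservesCurrent a b)
    (hb0 : Tendsto b atTop (𝓝 0)) {R m : ℤ} (hR : 0 < R) (haR : a R ≠ 0) (hm : 0 < m)
    (hzero : ∀ k : ℕ, a (m + k * R) = 0) (k : ℕ) : b (m + k * R) = 0 := by
  have hpos : ∀ k : ℕ, 0 < m + k * R := fun k => by positivity
  have hconst : ∀ k : ℕ, b (m + k * R) = b m := by
    intro k
    induction k with
    | zero => simp
    | succ k ih =>
      rw [← ih, Nat.cast_succ, add_one_mul, ← add_assoc]
      exact h.b_add_eq_of_a_eq_zero hR.ne' haR (hpos k).ne' (by linarith [hpos k])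
        (hzero k)
  have hlim : Tendsto (fun k : ℕ => b (m + k * R)) atTop (𝓝 0) :=
    hb0.comp (tendsto_atTop_add_const_left _ m (tendsto_natCast_atTop_atTop.atTop_mul_const' hR))
  rw [hconst]
  exact tendsto_nhds_unique tendsto_const_nhds (hlim.congr hconst)

theorem a_add_mul_eq_zero_of_lt (h : ConservesCurrent a b) {R : ℤ} (hR : 0 < R) (haR : a R ≠ 0)
    (hmin : ∀ r, 0 < r → r < R → a r = 0) {s : ℤ} (hs : 0 < s) (hsR : s < R) (k : ℕ) :
    a (s + k * R) = 0 := by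
  induction k with
  | zero => simpa using hmin s hs hsR
  | succ k ih =>
    by_contra hne
    have hpos : 0 < s + (k + 1 : ℕ) * R := by positivity
    refine h.a_sub_ne_zero hR.ne' haR hpos.ne' hne (by linarith : -R < _).ne' ?_ ?_
    · push_cast
      nlinarith
    · rwa [Nat.cast_succ, add_one_mul, ← add_assoc, add_sub_cancel_right]

theorem a_eq_zero_and_b_eq_zero_of_not_dvd (h : ConservesCurrent a b)
    (hb0 : Tendsto b atTop (𝓝 0)) {R : ℤ} (hR : 0 < R) (haR : a R ≠ 0)
    (hmin : ∀ r, 0 < r → r < R → a r = 0) {r : ℤ} (hr : 0 < r) (hRr : ¬R ∣ r) :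
    a r = 0 ∧ b r = 0 := by
  have hs : 0 < r % R := (Int.emod_pos_of_not_dvd hRr).resolve_left hR.ne'
  have hzero := h.a_add_mul_eq_zero_of_lt hR haR hmin hs (Int.emod_lt_of_pos r hR)
  have hr' : r = r % R + ((r / R).toNat : ℕ) * R := by
    rw [Int.toNat_of_nonneg (Int.ediv_nonneg hr.le hR.le), mul_comm, Int.emod_add_mul_ediv]
  rw [hr']
  exact ⟨hzero _, h.b_add_mul_eq_zero_of_a_add_mul_eq_zero hb0 hR haR hs hzero _⟩

theorem a_ne_zero_of_two_le (h : ConservesCurrent a b) (h1 : a 1 ≠ 0) {m : ℤ}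
    (hm : 2 ≤ m) (ham : a m ≠ 0) {n : ℤ} (hn : 1 ≤ n) : a n ≠ 0 := by
  rcases le_total m n with hmn | hnm
  · induction n, hmn using Int.leInduction with
    | base => exact ham
    | succ n hmn ih =>
      exact h.a_add_ne_zero one_ne_zero h1 (by omega) (ih (by omega)) (by omega) (by omega)
  · induction n, hnm using Int.leInductionDown with
    | base => exact ham
    | pred n hnm ih =>
      exact h.a_sub_ne_zero one_ne_zero h1 (by omega) (ih (by omega)) (by omega) (by omega)

theorem b_eq_zero_of_forall_a_eq_zero (h : ConservesCurrent a b)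
    (hb0 : Tendsto b atTop (𝓝 0)) (h1 : a 1 ≠ 0) (h2 : ∀ n, 2 ≤ n → a n = 0) {n : ℤ}
    (hn : 1 ≤ n) : b n = 0 := by
  have hzero := h.b_add_mul_eq_zero_of_a_add_mul_eq_zero hb0 one_pos h1 two_pos
    (fun k => h2 _ (by omega))
  have hb2 : b 2 = 0 := by simpa using hzero 0
  rcases hn.eq_or_lt with rfl | hn
  · have e := h.funEq_sub (u := 2) (v := 1) two_ne_zero one_ne_zero (by norm_num)
    norm_num [h2 2 le_rfl, hb2] at e
    exact e.resolve_left h1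
  · have := hzero (n - 2).toNat
    rwa [Int.toNat_of_nonneg (by omega), mul_one, add_sub_cancel] at this

theorem sq_mul_a_add_two (h : ConservesCurrent a b) (hpos : ∀ n, 1 ≤ n → a n ≠ 0) {n : ℤ}
    (hn : 1 ≤ n) : ((n + 2 : ℤ) : ℝ) ^ 2 * a (n + 2) = (n : ℝ) ^ 2 * a n := by
  have e1 := h.funEq (n + 1) 1 (by omega) one_ne_zero (by omega)
  have e2 := h.funEq_sub (u := n + 1) (v := 1) (by omega) one_ne_zero (by omega)
  rw [add_assoc, one_add_one_eq_two] at e1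
  rw [add_sub_cancel_right] at e2
  push_cast at e1 e2 ⊢
  have key : a (n + 1) * a 1 * ((n : ℝ) ^ 2 * a n - ((n : ℝ) + 2) ^ 2 * a (n + 2)) = 0 := by
    linear_combination (n * a n) * e1 - ((n + 2) * a (n + 2)) * e2
  have hdiff := (mul_eq_zero.1 key).resolve_left (mul_ne_zero (hpos _ (by omega)) (hpos 1 le_rfl))
  linear_combination -hdiff

theorem sq_mul_a_of_odd (h : ConservesCurrent a b) (hpos : ∀ n, 1 ≤ n → a n ≠ 0) {n : ℤ}
    (hn : 1 ≤ n) (hodd : Odd n) : (n : ℝ) ^ 2 * a n = a 1 := by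
  have := apply_eq_of_even_sub (f := fun n : ℤ => (n : ℝ) ^ 2 * a n)
    (fun n hn => h.sq_mul_a_add_two hpos hn) hn (hodd.sub_odd odd_one)
  simpa using this

theorem sq_mul_a_of_even (h : ConservesCurrent a b) (hpos : ∀ n, 1 ≤ n → a n ≠ 0) {n : ℤ}
    (hn : 2 ≤ n) (heven : Even n) : (n : ℝ) ^ 2 * a n = 4 * a 2 := by
  have := apply_eq_of_even_sub (f := fun n : ℤ => (n : ℝ) ^ 2 * a n)
    (fun n hn => h.sq_mul_a_add_two hpos (by omega)) hn (heven.sub even_two)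
  norm_num at this
  exact this

theorem b_eq_of_even (h : ConservesCurrent a b) (hpos : ∀ n, 1 ≤ n → a n ≠ 0) {n : ℤ}
    (hn : 2 ≤ n) (heven : Even n) : b n = b 1 - 4 * a 2 + 4 * a 2 / (n : ℝ) ^ 2 := by
  have e := h.funEq_sub (u := n) (v := 1) (by omega) one_ne_zero (by omega)
  have hA := h.sq_mul_a_of_even hpos hn heven
  have hA' := h.sq_mul_a_of_odd hpos (n := n - 1) (by omega) (heven.sub_odd odd_one)
  push_cast at e hA'
  have key : a 1 * ((n : ℝ) ^ 2 * (b n - b 1) + 4 * a 2 * ((n : ℝ) ^ 2 - 1)) = 0 := by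
    linear_combination ((n : ℝ) ^ 2 * ((n : ℝ) - 1)) * e - (((n : ℝ) ^ 2 - 1) * a 1) * hA
      - ((n : ℝ) ^ 2 * (b n - b 1)) * hA'
  have hn2 : (n : ℝ) ^ 2 ≠ 0 := by positivity
  field_simp
  linear_combination (mul_eq_zero.1 key).resolve_left (hpos 1 le_rfl)

theorem mul_b_eq_of_odd (h : ConservesCurrent a b) (hpos : ∀ n, 1 ≤ n → a n ≠ 0) {n : ℤ}
    (hn : 3 ≤ n) (hodd : Odd n) :
    4 * a 2 * b n = 4 * a 2 * b 1 - a 1 ^ 2 + a 1 ^ 2 / (n : ℝ) ^ 2 := by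
  have e := h.funEq_sub (u := n) (v := 1) (by omega) one_ne_zero (by omega)
  have hA := h.sq_mul_a_of_odd hpos (by omega) hodd
  have hA' := h.sq_mul_a_of_even hpos (n := n - 1) (by omega) (hodd.sub_odd odd_one)
  push_cast at e hA'
  have hn2 : (n : ℝ) ^ 2 ≠ 0 := by positivity
  field_simp
  linear_combination ((n : ℝ) ^ 2 * ((n : ℝ) - 1)) * e - (((n : ℝ) ^ 2 - 1) * a 1) * hA
    - ((n : ℝ) ^ 2 * (b n - b 1)) * hA'

theorem b_one_eq (h : ConservesCurrent a b) (hb0 : Tendsto b atTop (𝓝 0))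
    (hpos : ∀ n, 1 ≤ n → a n ≠ 0) : b 1 = 4 * a 2 := by
  have := eq_zero_of_tendsto_of_eq_add_div_sq hb0 (g := fun k : ℕ => 2 * k + 2)
    (tendsto_atTop_mono (fun k => by omega) tendsto_natCast_atTop_atTop)
    (fun k => h.b_eq_of_even hpos (by omega) ⟨k + 1, by ring⟩)
  linarith

theorem mul_b_one_eq (h : ConservesCurrent a b) (hb0 : Tendsto b atTop (𝓝 0))
    (hpos : ∀ n, 1 ≤ n → a n ≠ 0) : 4 * a 2 * b 1 = a 1 ^ 2 := by
  have hb0' : Tendsto (fun n => 4 * a 2 * b n) atTop (𝓝 0) := by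
    simpa using hb0.const_mul (4 * a 2)
  have := eq_zero_of_tendsto_of_eq_add_div_sq hb0' (g := fun k : ℕ => 2 * k + 3)
    (tendsto_atTop_mono (fun k => by omega) tendsto_natCast_atTop_atTop)
    (fun k => h.mul_b_eq_of_odd hpos (by omega) ⟨k + 1, by ring⟩)
  linarith

theorem sq_mul_b_eq (h : ConservesCurrent a b) (hb0 : Tendsto b atTop (𝓝 0))
    (hpos : ∀ n, 1 ≤ n → a n ≠ 0) {n : ℤ} (hn : 1 ≤ n) : (n : ℝ) ^ 2 * b n = 4 * a 2 := by
  have hb1 := h.b_one_eq hb0 hpos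
  have hn2 : (n : ℝ) ^ 2 ≠ 0 := by positivity
  rcases hn.eq_or_lt with rfl | hn
  · simpa using hb1
  rcases n.even_or_odd with heven | hodd
  · rw [h.b_eq_of_even hpos hn heven, hb1]
    field_simp
    ring
  · have hd : 4 * a 2 ≠ 0 := mul_ne_zero four_ne_zero (hpos 2 one_le_two)
    have hn3 : 3 ≤ n := by obtain ⟨k, rfl⟩ := hodd; omega
    apply mul_left_cancel₀ hd
    rw [mul_left_comm, h.mul_b_eq_of_odd hpos hn3 hodd, h.mul_b_one_eq hb0 hpos,
      ← h.mul_b_one_eq hb0 hpos, hb1]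
    field_simp
    ring

theorem haldane_shastry (h : ConservesCurrent a b) (hb0 : Tendsto b atTop (𝓝 0))
    (hpos : ∀ n, 1 ≤ n → a n ≠ 0) :
    (∀ n : ℤ, 1 ≤ n → a n = a 1 / (n : ℝ) ^ 2 ∧ b n = a 1 / (n : ℝ) ^ 2) ∨
    (∀ n : ℤ, 1 ≤ n → a n = (-1 : ℝ) ^ (n + 1) * a 1 / (n : ℝ) ^ 2 ∧
      b n = -(a 1) / (n : ℝ) ^ 2) := by
  have hd : (4 * a 2) ^ 2 = a 1 ^ 2 := by
    linear_combination (-(4 * a 2)) * h.b_one_eq hb0 hpos + h.mul_b_one_eq hb0 hpos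
  have ha (n : ℤ) (hn : 1 ≤ n) : (n : ℝ) ^ 2 * a n = if Even n then 4 * a 2 else a 1 := by
    split_ifs with heven
    · exact h.sq_mul_a_of_even hpos (by obtain ⟨k, rfl⟩ := heven; omega) heven
    · exact h.sq_mul_a_of_odd hpos hn (Int.not_even_iff_odd.1 heven)
  rcases sq_eq_sq_iff_eq_or_eq_neg.1 hd with hd | hd
  · refine Or.inl fun n hn => ⟨?_, ?_⟩ <;> rw [eq_div_iff (by positivity), mul_comm]
    · rw [ha n hn, hd, ite_self]
    · rw [h.sq_mul_b_eq hb0 hpos hn, hd]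
  · refine Or.inr fun n hn => ⟨?_, ?_⟩ <;> rw [eq_div_iff (by positivity), mul_comm]
    · rw [ha n hn, hd]
      split_ifs with heven
      · rw [(heven.add_one).neg_one_zpow]; ring
      · rw [(Int.not_even_iff_odd.1 heven).add_one.neg_one_zpow]; ring
    · rw [h.sq_mul_b_eq hb0 hpos hn, hd]

end ConservesCurrent

theorem stmt_9 (a b : ℤ → ℝ)
    (ha_even : ∀ r : ℤ, a (-r) = a r) (hb_even : ∀ r : ℤ, b (-r) = b r)
    (ha_ne : ∃ r : ℤ, r ≠ 0 ∧ a r ≠ 0)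
    (hb_decay : Tendsto (fun r : ℕ => b (r : ℤ)) atTop (nhds 0))
    (hfe : ∀ u v : ℤ, u ≠ 0 → v ≠ 0 → u + v ≠ 0 →
      ((u : ℝ) - (v : ℝ)) * a u * a v
        + ((u : ℝ) + (v : ℝ)) * a (u + v) * (b u - b v) = 0) :
    (∃ R : ℤ, 0 < R ∧ (∀ r : ℤ, 0 < r → (a r ≠ 0 ↔ r = R)) ∧
      (∀ r : ℤ, r ≠ 0 → b r = 0)) ∨
    (∃ R : ℤ, 0 < R ∧ a R ≠ 0 ∧
      ((∀ n : ℤ, 1 ≤ n → a (n * R) = a R / (n : ℝ) ^ 2 ∧ b (n * R) = a R / (n : ℝ) ^ 2) ∨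
       (∀ n : ℤ, 1 ≤ n → a (n * R) = (-1 : ℝ) ^ (n + 1) * a R / (n : ℝ) ^ 2 ∧
          b (n * R) = -(a R) / (n : ℝ) ^ 2)) ∧
      (∀ r : ℤ, 0 < r → ¬ R ∣ r → a r = 0 ∧ b r = 0)) := by
  have h : ConservesCurrent a b := ⟨ha_even, hb_even, hfe⟩
  have hb0 : Tendsto b atTop (𝓝 0) := by rwa [← Nat.map_cast_int_atTop, tendsto_map'_iff]
  obtain ⟨R, hR, haR, hmin⟩ := exists_least_pos_apply_ne_zero ha_even ha_ne
  have hoff r (hr : 0 < r) (hRr : ¬R ∣ r) : a r = 0 ∧ b r = 0 :=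
    h.a_eq_zero_and_b_eq_zero_of_not_dvd hb0 hR haR hmin hr hRr
  have hlat := h.comp_mul hR.ne'
  have hlat0 : Tendsto (fun n => b (n * R)) atTop (𝓝 0) :=
    hb0.comp (tendsto_id.atTop_mul_const' hR)
  have hlat1 : a (1 * R) ≠ 0 := by rwa [one_mul]
  by_cases hXX : ∀ n, 2 ≤ n → a (n * R) = 0
  · have hbpos : ∀ r, 0 < r → b r = 0 := fun r => forall_pos_of_mul_of_not_dvd hR
      (fun n hn => hlat.b_eq_zero_of_forall_a_eq_zero hlat0 hlat1 hXX hn)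
      (fun r hr hRr => (hoff r hr hRr).2)
    refine Or.inl ⟨R, hR, fun r hr => ⟨fun har => ?_, fun hrR => hrR ▸ haR⟩, fun r hr => ?_⟩
    · refine forall_pos_of_mul_of_not_dvd (P := fun r => a r ≠ 0 → r = R) hR
        (fun n hn han => ?_) (fun r hr hRr har => absurd (hoff r hr hRr).1 har) hr har
      rcases hn.eq_or_lt with rfl | hn
      · exact one_mul R
      · exact absurd (hXX n (by omega)) han
    · rcases hr.lt_or_gt with hr | hr
      · rw [← hb_even]
        exact hbpos _ (by omega)
      · exact hbpos r hr
  · push Not at hXX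
    obtain ⟨m, hm, ham⟩ := hXX
    refine Or.inr ⟨R, hR, haR, ?_, hoff⟩
    simpa only [one_mul] using hlat.haldane_shastry hlat0
      fun n hn => hlat.a_ne_zero_of_two_le hlat1 hm ham hn
end

section
/- Let α > 0, a(x) = 1/|x|^α, b = Δ·a with Δ ≠ 0 and |Δ| ≠ 1. Then there exist nonzero integers x, y with x ≠ y and z = x+y ≠ 0 such that Δ(1−Δ²)(a(x)−a(y))(a(y)−a(z))(a(z)−a(x)) ≠ 0. Consequently, the power-law XXZ chain admits no nonzero odd function K : ℤ\{0} → ℝ satisfying K(u)a(v) − K(v)a(u) + K(u+v)(b(u)−b(v)) = 0 for all nonzero u, v with u+v ≠ 0. -/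
/-!
Fix positive integers `x < y` and put `z = x + y`. The relation at `(x, y)`, `(z, -y)` and `(z, -x)`
only involves `K x`, `K y`, `K z` (using that `K` is odd and `a` even), and these three linear
equations have determinant `Δ (1 - Δ²) (a x - a y) (a y - a z) (a z - a x)`. Since the power law `a`
is strictly decreasing on positive integers, this is nonzero for `Δ ≠ 0, ±1`, so `K x = 0`.
Taking `y = x + 1` kills `K` on positive integers, and oddness on all of `ℤ`.
-/

open Set

theorem eq_zero_of_det_ne_zero {R : Type*} [CommRing R] [NoZeroDivisors R]
    {d A B C p q s : R} (hdet : d * (1 - d ^ 2) * (A - B) * (B - C) * (C - A) ≠ 0)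
    (h₁ : B * p - A * q + d * (A - B) * s = 0)
    (h₂ : d * (C - B) * p + C * q + B * s = 0)
    (h₃ : C * p + d * (C - A) * q + A * s = 0) : p = 0 := by
  have hdet_mul : d * (1 - d ^ 2) * (A - B) * (B - C) * (C - A) * p = 0 := by
    linear_combination (C * A - B * d * (C - A)) * h₁ +
      (A ^ 2 + d ^ 2 * (A - B) * (C - A)) * h₂ + (-(A * B) - C * d * (A - B)) * h₃
  exact (mul_eq_zero.mp hdet_mul).resolve_left hdet

theorem strictAntiOn_abs_rpow_neg {α : ℝ} (hα : 0 < α) :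
    StrictAntiOn (fun x : ℤ => |(x : ℝ)| ^ (-α)) (Ioi 0) := by
  intro m hm n hn hmn
  have hm' : (0 : ℝ) < m := by exact_mod_cast hm
  have hn' : (0 : ℝ) < n := by exact_mod_cast hn
  simp only [abs_of_pos hm', abs_of_pos hn']
  exact Real.rpow_lt_rpow_of_neg hm' (by exact_mod_cast hmn) (neg_neg_of_pos hα)

section PowerLawRelation

variable {a : ℤ → ℝ} {Δ : ℝ}

theorem det_ne_zero_of_strictAntiOn (ha : StrictAntiOn a (Ioi 0)) (hΔ : Δ ≠ 0)
    (hΔ1 : Δ ^ 2 ≠ 1) {u v w : ℤ} (hu : 0 < u) (huv : u < v) (hvw : v < w) :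
    Δ * (1 - Δ ^ 2) * (a u - a v) * (a v - a w) * (a w - a u) ≠ 0 := by
  have hv : 0 < v := hu.trans huv
  have hw : 0 < w := hv.trans hvw
  have h₁ : a v < a u := ha hu hv huv
  have h₂ : a w < a v := ha hv hw hvw
  have h₃ : a w < a u := h₂.trans h₁
  refine mul_ne_zero (mul_ne_zero (mul_ne_zero (mul_ne_zero hΔ ?_) ?_) ?_) ?_
  · exact sub_ne_zero.mpr (Ne.symm hΔ1)
  · exact sub_ne_zero.mpr h₁.ne'
  · exact sub_ne_zero.mpr h₂.ne'
  · exact sub_ne_zero.mpr h₃.ne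

variable {K : ℤ → ℝ}

theorem eq_zero_of_pos_of_relation (ha : StrictAntiOn a (Ioi 0)) (ha_even : Function.Even a)
    (hΔ : Δ ≠ 0) (hΔ1 : Δ ^ 2 ≠ 1) (hK : Function.Odd K)
    (hrel : ∀ u v : ℤ, u ≠ 0 → v ≠ 0 → u + v ≠ 0 →
      K u * a v - K v * a u + K (u + v) * (Δ * a u - Δ * a v) = 0)
    {x y : ℤ} (hx : 0 < x) (hxy : x < y) : K x = 0 := by
  have h₁ := hrel x y (by omega) (by omega) (by omega)
  have h₂ := hrel (x + y) (-y) (by omega) (by omega) (by omega)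
  have h₃ := hrel (x + y) (-x) (by omega) (by omega) (by omega)
  rw [add_neg_cancel_right, ha_even, hK] at h₂
  rw [show x + y + -x = y by ring, ha_even, hK] at h₃
  exact eq_zero_of_det_ne_zero (q := K y) (s := K (x + y))
    (det_ne_zero_of_strictAntiOn (w := x + y) ha hΔ hΔ1 hx hxy (by omega))
    (by linear_combination h₁) (by linear_combination h₂) (by linear_combination h₃)

theorem eq_zero_of_relation (ha : StrictAntiOn a (Ioi 0)) (ha_even : Function.Even a)
    (hΔ : Δ ≠ 0) (hΔ1 : Δ ^ 2 ≠ 1) (hK : Function.Odd K)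
    (hrel : ∀ u v : ℤ, u ≠ 0 → v ≠ 0 → u + v ≠ 0 →
      K u * a v - K v * a u + K (u + v) * (Δ * a u - Δ * a v) = 0)
    (r : ℤ) : K r = 0 := by
  have hpos : ∀ r : ℤ, 0 < r → K r = 0 := fun r hr =>
    eq_zero_of_pos_of_relation ha ha_even hΔ hΔ1 hK hrel hr (lt_add_one r)
  rcases lt_trichotomy r 0 with hr | rfl | hr
  · rw [← neg_neg r, hK, hpos (-r) (by omega), neg_zero]
  · exact self_eq_neg.mp (hK 0)
  · exact hpos r hr

end PowerLawRelation

theorem stmt_12 (α : ℝ) (hα : 0 < α) (Δ : ℝ) (hΔ : Δ ≠ 0) (hΔ1 : |Δ| ≠ 1)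
    (a b : ℤ → ℝ)
    (ha : ∀ x : ℤ, a x = |(x : ℝ)| ^ (-α))
    (hb : ∀ x : ℤ, b x = Δ * a x) :
    (∃ x y : ℤ, x ≠ 0 ∧ y ≠ 0 ∧ x ≠ y ∧ x + y ≠ 0 ∧
      Δ * (1 - Δ ^ 2) * (a x - a y) * (a y - a (x + y)) * (a (x + y) - a x) ≠ 0) ∧
    ¬ ∃ K : ℤ → ℝ, (∃ r : ℤ, r ≠ 0 ∧ K r ≠ 0) ∧ (∀ r : ℤ, K (-r) = -K r) ∧
        (∀ u v : ℤ, u ≠ 0 → v ≠ 0 → u + v ≠ 0 →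
          K u * a v - K v * a u + K (u + v) * (b u - b v) = 0) := by
  obtain rfl : a = fun x : ℤ => |(x : ℝ)| ^ (-α) := funext ha
  have ha_anti := strictAntiOn_abs_rpow_neg hα
  have ha_even : Function.Even fun x : ℤ => |(x : ℝ)| ^ (-α) := fun x => by
    simp only [Int.cast_neg, abs_neg]
  have hΔ2 : Δ ^ 2 ≠ 1 := fun h => hΔ1 ((abs_eq zero_le_one).mpr (sq_eq_one_iff.mp h))
  refine ⟨⟨1, 2, by norm_num, by norm_num, by norm_num, by norm_num,
    det_ne_zero_of_strictAntiOn ha_anti hΔ hΔ2 (by norm_num) (by norm_num) (by norm_num)⟩, ?_⟩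
  rintro ⟨K, ⟨r, -, hKr⟩, hK, hrel⟩
  simp only [hb] at hrel
  exact hKr (eq_zero_of_relation ha_anti ha_even hΔ hΔ2 hK hrel r)
end

section
/- For a(x) = 1/|x|^α and α = 2, the optimal anisotropy Δ*(2) = −B(2)/A(2) equals 1, where A(α) = Σ_{u,v ≠ 0, u+v ≠ 0} (u+v)²a(u+v)²(a(u)−a(v))² and B(α) = Σ_{u,v ≠ 0, u+v ≠ 0} (u²−v²)a(u)a(v)a(u+v)(a(u)−a(v)). Equivalently, A(2) + B(2) = 0. -/
/-! At `α = 2`, with `a(x) = x⁻²`, the summands of the two coefficients satisfy the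
pointwise Haldane–Shastry identity `(u² - v²) a(u) a(v) a(u+v) = -(u+v)² a(u+v)² (a(u) - a(v))`,
so every summand of `B(2)` is minus the corresponding summand of `A(2)` and `B(2) = -A(2)`.
It remains to see `A(2) > 0`: its summands are nonnegative, summable since
`(u+v)² a(u+v)² (a(u) - a(v))² = (u - v)² / (u⁴ v⁴)`, and the one at `(1, 2)` is positive. -/

noncomputable def pla (α : ℝ) (x : ℤ) : ℝ := |(x : ℝ)| ^ (-α)

def PairNZ : Type := {p : ℤ × ℤ // p.1 ≠ 0 ∧ p.2 ≠ 0 ∧ p.1 + p.2 ≠ 0}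

noncomputable def Acoef (α : ℝ) : ℝ :=
  ∑' p : PairNZ, ((p.1.1 : ℝ) + (p.1.2 : ℝ)) ^ 2 * pla α (p.1.1 + p.1.2) ^ 2
    * (pla α p.1.1 - pla α p.1.2) ^ 2

noncomputable def Bcoef (α : ℝ) : ℝ :=
  ∑' p : PairNZ, ((p.1.1 : ℝ) ^ 2 - (p.1.2 : ℝ) ^ 2) * pla α p.1.1 * pla α p.1.2
    * pla α (p.1.1 + p.1.2) * (pla α p.1.1 - pla α p.1.2)

noncomputable def Aterm (α : ℝ) (p : PairNZ) : ℝ :=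
  ((p.1.1 : ℝ) + (p.1.2 : ℝ)) ^ 2 * pla α (p.1.1 + p.1.2) ^ 2 * (pla α p.1.1 - pla α p.1.2) ^ 2

noncomputable def Bterm (α : ℝ) (p : PairNZ) : ℝ :=
  ((p.1.1 : ℝ) ^ 2 - (p.1.2 : ℝ) ^ 2) * pla α p.1.1 * pla α p.1.2
    * pla α (p.1.1 + p.1.2) * (pla α p.1.1 - pla α p.1.2)

lemma Acoef_eq_tsum_Aterm (α : ℝ) : Acoef α = ∑' p, Aterm α p := rfl

lemma Bcoef_eq_tsum_Bterm (α : ℝ) : Bcoef α = ∑' p, Bterm α p := rfl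

lemma pla_two (x : ℤ) : pla 2 x = ((x : ℝ) ^ 2)⁻¹ := by
  rw [pla, show (-2 : ℝ) = -((2 : ℕ) : ℝ) by norm_num, Real.rpow_neg (abs_nonneg _),
    Real.rpow_natCast, sq_abs]

lemma PairNZ.cast_ne_zero (p : PairNZ) :
    (p.1.1 : ℝ) ≠ 0 ∧ (p.1.2 : ℝ) ≠ 0 ∧ (p.1.1 : ℝ) + p.1.2 ≠ 0 := by
  obtain ⟨_, hu, hv, huv⟩ := p
  exact ⟨by exact_mod_cast hu, by exact_mod_cast hv, by exact_mod_cast huv⟩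

lemma Aterm_nonneg (α : ℝ) (p : PairNZ) : 0 ≤ Aterm α p := by
  unfold Aterm
  positivity

lemma Bterm_two (p : PairNZ) : Bterm 2 p = -Aterm 2 p := by
  obtain ⟨hu, hv, huv⟩ := p.cast_ne_zero
  simp only [Aterm, Bterm, pla_two]
  push_cast
  field_simp
  ring

lemma Aterm_two (p : PairNZ) :
    Aterm 2 p = ((p.1.1 : ℝ) - p.1.2) ^ 2 / ((p.1.1 : ℝ) ^ 4 * (p.1.2 : ℝ) ^ 4) := by
  obtain ⟨hu, hv, huv⟩ := p.cast_ne_zero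
  simp only [Aterm, pla_two]
  push_cast
  field_simp
  ring

lemma summable_Aterm_two : Summable (Aterm 2) := by
  have summable_inv_pow {k : ℕ} (hk : 1 < k) : Summable fun n : ℤ => ((n : ℝ) ^ k)⁻¹ := by
    simpa only [one_div] using Real.summable_one_div_int_pow.2 hk
  set g : ℤ × ℤ → ℝ := fun q =>
    2 * (((q.1 : ℝ) ^ 2)⁻¹ * ((q.2 : ℝ) ^ 4)⁻¹) + 2 * (((q.1 : ℝ) ^ 4)⁻¹ * ((q.2 : ℝ) ^ 2)⁻¹)
  have hg : Summable g :=
    ((summable_inv_pow one_lt_two).mul_of_nonneg (summable_inv_pow (by norm_num))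
        (fun _ => by positivity) (fun _ => by positivity)).mul_left 2 |>.add <|
      ((summable_inv_pow (by norm_num)).mul_of_nonneg (summable_inv_pow one_lt_two)
        (fun _ => by positivity) (fun _ => by positivity)).mul_left 2
  have hg_sub : Summable fun p : PairNZ => g p.1 := hg.subtype _
  refine .of_nonneg_of_le (Aterm_nonneg 2) (fun p => ?_) hg_sub
  obtain ⟨hu, hv, -⟩ := p.cast_ne_zero
  have hg_eq : g p.1 = (2 * (p.1.1 : ℝ) ^ 2 + 2 * (p.1.2 : ℝ) ^ 2)
      / ((p.1.1 : ℝ) ^ 4 * (p.1.2 : ℝ) ^ 4) := by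
    simp only [g]
    field_simp
  rw [hg_eq, Aterm_two]
  exact div_le_div_of_nonneg_right (by nlinarith [sq_nonneg ((p.1.1 : ℝ) + p.1.2)])
    (by positivity)

lemma Acoef_two_pos : 0 < Acoef 2 := by
  rw [Acoef_eq_tsum_Aterm]
  refine summable_Aterm_two.tsum_pos (Aterm_nonneg 2) ⟨(1, 2), by norm_num⟩ ?_
  simp only [Aterm, pla_two]
  norm_num

lemma Bcoef_two : Bcoef 2 = -Acoef 2 := by
  rw [Bcoef_eq_tsum_Bterm, Acoef_eq_tsum_Aterm, tsum_congr Bterm_two, tsum_neg]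

theorem stmt_14 : Acoef 2 + Bcoef 2 = 0 ∧ -(Bcoef 2) / Acoef 2 = 1 := by
  rw [Bcoef_two, neg_neg]
  exact ⟨add_neg_cancel _, div_self Acoef_two_pos.ne'⟩
end
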